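/- Let k > 0, let r be an odd positive integer, let f(t) = k t^r on [-1/2,1/2], and let ε > 0 satisfy ε² ≤ (1/2)^{2r+1} k² · 2r²/((r+1)(2r+1)). Then ω(ε, f, F_m) = ((r+1)(2r+1)/(2r²))^{r/(2r+1)} k^{1/(2r+1)} ε^{2r/(2r+1)}. -/

import Mathlib

open MeasureTheory

/-- The local modulus of continuity of `f` at `0` over the class of nondecreasing
functions on `[-1/2, 1/2]`. -/
noncomputable def omegaMonotone (ε : ℝ) (f : ℝ → ℝ) : ℝ :=
  sSup {d : ℝ | ∃ g : ℝ → ℝ, MonotoneOn g (Set.Icc (-(1:ℝ)/2) (1/2)) ∧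
    (∫ t in (-(1:ℝ)/2)..(1/2), (g t - f t)^2) ≤ ε^2 ∧ d = |g 0 - f 0|}

/-!
Write `f t = k tʳ` and let `c ∈ (0, 1/2]` be the point with `∫₀ᶜ (f c - f)² = ε²`; the modulus
is `f c`. If a monotone `g` had `g 0 > f c`, then `g ≥ g 0 > f` on `[0, c]`, so
`∫ (g - f)² > ∫₀ᶜ (f c - f)² = ε²`. As `f` is odd, the reflection `g ↦ -g (-·)` turns
`g 0 < -f c` into the previous case. The bound is attained by the function equal to `f` on the
negative axis and to `max f (f c)` on the nonnegative one. Finally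
`∫₀ᶜ (k cʳ - k tʳ)² = k² c^(2r+1) · 2r²/((r+1)(2r+1))` determines `c`, hence `f c`.
-/

open Set intervalIntegral

section

variable {f g : ℝ → ℝ} {a b c : ℝ}

theorem intervalIntegrable_sq_sub_of_monotoneOn (hg : MonotoneOn g (Icc a b))
    (hf : MonotoneOn f (Icc a b)) {p q : ℝ} (hp : p ∈ Icc a b) (hq : q ∈ Icc a b) :
    IntervalIntegrable (fun t => (g t - f t) ^ 2) volume p q :=
  IntegrableOn.intervalIntegrable <| IntegrableOn.mono_set
    ((hg.memLp_isCompact isCompact_Icc).sub (hf.memLp_isCompact isCompact_Icc)).integrable_sq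
    (uIcc_subset_Icc hp hq)

theorem integral_sq_sub_le_of_monotoneOn (hg : MonotoneOn g (Icc a b))
    (hf : MonotoneOn f (Icc a b)) {p q : ℝ} (hap : a ≤ p) (hpq : p ≤ q) (hqb : q ≤ b) :
    ∫ t in p..q, (g t - f t) ^ 2 ≤ ∫ t in a..b, (g t - f t) ^ 2 :=
  have hab : a ≤ b := hap.trans (hpq.trans hqb)
  integral_mono_interval hap hpq hqb (ae_of_all _ fun _ => sq_nonneg _)
    (intervalIntegrable_sq_sub_of_monotoneOn hg hf (left_mem_Icc.2 hab) (right_mem_Icc.2 hab))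

theorem apply_zero_le_of_integral_sq_sub_le (hf : ContinuousOn f (Icc 0 c))
    (hfm : MonotoneOn f (Icc a b)) (hg : MonotoneOn g (Icc a b)) (ha : a ≤ 0) (hc : 0 < c)
    (hcb : c ≤ b)
    (hint : ∫ t in a..b, (g t - f t) ^ 2 ≤ ∫ t in 0..c, (f c - f t) ^ 2) : g 0 ≤ f c := by
  have h0c : Icc 0 c ⊆ Icc a b := Icc_subset_Icc ha hcb
  have hcmem : c ∈ Icc a b := h0c (right_mem_Icc.2 hc.le)
  have h0mem : (0 : ℝ) ∈ Icc a b := h0c (left_mem_Icc.2 hc.le)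
  have hfc : ∀ t ∈ Icc 0 c, f t ≤ f c := fun t ht => hfm (h0c ht) hcmem ht.2
  by_contra! hlt
  have hcont : ContinuousOn (fun t => (f c - f t) ^ 2) (Icc 0 c) := by fun_prop
  have hcont' : ContinuousOn (fun t => (g 0 - f t) ^ 2) (Icc 0 c) := by fun_prop
  have strict : ∫ t in 0..c, (f c - f t) ^ 2 < ∫ t in 0..c, (g 0 - f t) ^ 2 :=
    integral_lt_integral_of_continuousOn_of_le_of_exists_lt hc hcont hcont'
      (fun t ht => pow_le_pow_left₀ (sub_nonneg.2 (hfc t (Ioc_subset_Icc_self ht))) (by linarith) 2)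
      ⟨0, left_mem_Icc.2 hc.le, pow_lt_pow_left₀ (by linarith)
        (sub_nonneg.2 (hfc 0 (left_mem_Icc.2 hc.le))) two_ne_zero⟩
  have pointwise : ∫ t in 0..c, (g 0 - f t) ^ 2 ≤ ∫ t in 0..c, (g t - f t) ^ 2 :=
    integral_mono_on hc.le (hcont'.intervalIntegrable_of_Icc hc.le)
      (intervalIntegrable_sq_sub_of_monotoneOn hg hfm h0mem hcmem) fun t ht =>
        pow_le_pow_left₀ (by linarith [hfc t ht]) (by linarith [hg h0mem (h0c ht) ht.1]) 2
  linarith [integral_sq_sub_le_of_monotoneOn hg hfm ha hc.le hcb]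

noncomputable def raiseOnNonneg (f : ℝ → ℝ) (M t : ℝ) : ℝ :=
  if t < 0 then f t else max (f t) M

theorem Monotone.raiseOnNonneg (hf : Monotone f) (M : ℝ) : Monotone (raiseOnNonneg f M) := by
  intro s t hst
  unfold _root_.raiseOnNonneg
  split_ifs with hs ht ht
  · exact hf hst
  · exact (hf hst).trans (le_max_left _ _)
  · linarith
  · exact max_le_max_right M (hf hst)

theorem sq_raiseOnNonneg_sub (hf : Monotone f) (t : ℝ) :
    (raiseOnNonneg f (f c) t - f t) ^ 2 = (Icc 0 c).indicator (fun t => (f c - f t) ^ 2) t := by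
  unfold raiseOnNonneg indicator
  split_ifs with hneg hmem hmem
  · exact absurd hmem.1 (not_le.2 hneg)
  · ring
  · rw [max_eq_right (hf hmem.2)]
  · rw [max_eq_left (hf (not_le.1 fun h => hmem ⟨not_lt.1 hneg, h⟩).le)]
    ring

theorem integral_sq_raiseOnNonneg_sub (hf : Monotone f) (ha : a < 0) (hc : 0 ≤ c)
    (hcb : c ≤ b) :
    ∫ t in a..b, (raiseOnNonneg f (f c) t - f t) ^ 2 = ∫ t in 0..c, (f c - f t) ^ 2 := by
  simp_rw [sq_raiseOnNonneg_sub hf]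
  rw [integral_of_le (by linarith), integral_of_le hc, setIntegral_indicator measurableSet_Icc,
    inter_eq_right.2 (Icc_subset_Ioc ha hcb), integral_Icc_eq_integral_Ioc]

theorem MonotoneOn.neg_comp_neg (hg : MonotoneOn g (Icc (-b) b)) :
    MonotoneOn (fun t => -g (-t)) (Icc (-b) b) := fun s hs t ht hst =>
  neg_le_neg (hg ⟨neg_le_neg ht.2, by linarith [ht.1]⟩ ⟨neg_le_neg hs.2, by linarith [hs.1]⟩
    (neg_le_neg hst))

theorem integral_sq_neg_comp_neg_sub (hodd : ∀ t, f (-t) = -f t) (b : ℝ) :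
    ∫ t in -b..b, (-g (-t) - f t) ^ 2 = ∫ t in -b..b, (g t - f t) ^ 2 := by
  have h : ∀ t, (-g (-t) - f t) ^ 2 = (g (-t) - f (-t)) ^ 2 := fun t => by rw [hodd]; ring
  simp_rw [h]
  rw [integral_comp_neg (fun t => (g t - f t) ^ 2), neg_neg]

theorem omegaMonotone_eq_of_odd {ε : ℝ} (hf : Continuous f) (hfm : Monotone f)
    (hodd : ∀ t, f (-t) = -f t) (hc : 0 < c) (hc2 : c ≤ 1 / 2)
    (hε : ∫ t in 0..c, (f c - f t) ^ 2 = ε ^ 2) :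
    omegaMonotone ε f = f c := by
  have hf0 : f 0 = 0 := by
    have h := hodd 0
    rw [neg_zero] at h
    linarith
  have hfc : 0 ≤ f c := hf0 ▸ hfm hc.le
  refine IsGreatest.csSup_eq
    ⟨⟨raiseOnNonneg f (f c), (hfm.raiseOnNonneg _).monotoneOn _, ?_, ?_⟩, ?_⟩
  · rw [integral_sq_raiseOnNonneg_sub hfm (by norm_num) hc.le hc2, hε]
  · simp only [raiseOnNonneg, lt_irrefl, if_false, hf0, max_eq_right hfc, sub_zero,
      abs_of_nonneg hfc]
  · rintro d ⟨g, hg, hint, rfl⟩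
    rw [neg_div] at hg hint
    have bound : ∀ g : ℝ → ℝ, MonotoneOn g (Icc (-(1 / 2)) (1 / 2)) →
        ∫ t in -(1 / 2)..1 / 2, (g t - f t) ^ 2 ≤ ε ^ 2 → g 0 ≤ f c := fun g hg hint =>
      apply_zero_le_of_integral_sq_sub_le hf.continuousOn (hfm.monotoneOn _) hg (by norm_num)
        hc hc2 (hε ▸ hint)
    have reflected := bound _ hg.neg_comp_neg ((integral_sq_neg_comp_neg_sub hodd _).trans_le hint)
    rw [neg_zero] at reflected
    rw [hf0, sub_zero, abs_le]
    exact ⟨by linarith, bound g hg hint⟩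

end

theorem integral_sq_mul_pow_sub_mul_pow (k c : ℝ) (r : ℕ) :
    ∫ t in 0..c, (k * c ^ r - k * t ^ r) ^ 2
      = k ^ 2 * c ^ (2 * r + 1) * (2 * (r : ℝ) ^ 2 / (((r : ℝ) + 1) * (2 * (r : ℝ) + 1))) := by
  have expand : ∀ t : ℝ, (k * c ^ r - k * t ^ r) ^ 2
      = (k * c ^ r) ^ 2 - 2 * k ^ 2 * c ^ r * t ^ r + k ^ 2 * t ^ (2 * r) := fun t => by ring
  simp_rw [expand]
  rw [intervalIntegral.integral_add (Continuous.intervalIntegrable (by fun_prop) _ _)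
      (Continuous.intervalIntegrable (by fun_prop) _ _),
    intervalIntegral.integral_sub (Continuous.intervalIntegrable (by fun_prop) _ _)
      (Continuous.intervalIntegrable (by fun_prop) _ _),
    intervalIntegral.integral_const_mul, intervalIntegral.integral_const_mul, integral_pow,
    integral_pow, intervalIntegral.integral_const]
  rw [show c ^ (2 * r + 1) = (c ^ r) ^ 2 * c by ring, pow_succ]
  push_cast
  field_simp
  ring

theorem mul_pow_rpow_one_div_two_mul_add_one (p k ε : ℝ) (r : ℕ) (hp : 0 < p) (hk : 0 < k)
    (hε : 0 < ε) :
    k * ((p * ε ^ 2 / k ^ 2) ^ (1 / (2 * (r : ℝ) + 1))) ^ r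
      = p ^ ((r : ℝ) / (2 * (r : ℝ) + 1)) * k ^ (1 / (2 * (r : ℝ) + 1))
          * ε ^ (2 * (r : ℝ) / (2 * (r : ℝ) + 1)) := by
  have hk1 : k = k ^ (1 / (2 * (r : ℝ) + 1)) * k ^ (2 * (r : ℝ) / (2 * (r : ℝ) + 1)) := by
    have hsum : 1 / (2 * (r : ℝ) + 1) + 2 * r / (2 * r + 1) = 1 := by field_simp; ring
    rw [← Real.rpow_add hk, hsum, Real.rpow_one]
  rw [← Real.rpow_mul_natCast (by positivity), Real.div_rpow (by positivity) (by positivity),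
    Real.mul_rpow hp.le (by positivity), ← Real.rpow_natCast_mul hε.le,
    ← Real.rpow_natCast_mul hk.le]
  have e1 : 1 / (2 * (r : ℝ) + 1) * r = r / (2 * r + 1) := by ring
  have e2 : ((2 : ℕ) : ℝ) * (r / (2 * r + 1)) = 2 * r / (2 * r + 1) := by push_cast; ring
  rw [e1, e2]
  nth_rewrite 1 [hk1]
  field_simp

theorem modulus_power_monotone
    (k ε : ℝ) (r : ℕ) (hk : 0 < k) (hr : Odd r) (hε : 0 < ε)
    (hε2 : ε^2 ≤ ((1:ℝ)/2) ^ (2*r + 1) * k^2 * (2*(r:ℝ)^2/(((r:ℝ)+1)*(2*(r:ℝ)+1)))) :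
    omegaMonotone ε (fun t => k * t ^ r)
      = (((r:ℝ)+1)*(2*(r:ℝ)+1)/(2*(r:ℝ)^2)) ^ ((r:ℝ)/(2*(r:ℝ)+1))
          * k ^ ((1:ℝ)/(2*(r:ℝ)+1)) * ε ^ (2*(r:ℝ)/(2*(r:ℝ)+1)) := by
  have hr0 : (r : ℝ) ≠ 0 := by exact_mod_cast hr.pos.ne'
  set P : ℝ := ((r:ℝ)+1)*(2*(r:ℝ)+1)/(2*(r:ℝ)^2) with hP_def
  have hP : 0 < P := by positivity
  have hP_mul : P * (2*(r:ℝ)^2/(((r:ℝ)+1)*(2*(r:ℝ)+1))) = 1 := by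
    rw [hP_def]
    field_simp
  set c : ℝ := (P * ε ^ 2 / k ^ 2) ^ (1 / (2 * (r : ℝ) + 1))
  have hc : 0 < c := by positivity
  have hc_pow : c ^ (2 * r + 1) = P * ε ^ 2 / k ^ 2 := by
    rw [← Real.rpow_mul_natCast (by positivity)]
    push_cast
    rw [one_div_mul_cancel (by positivity), Real.rpow_one]
  have hc_le : c ≤ 1 / 2 := by
    refine (pow_le_pow_iff_left₀ hc.le (by norm_num) (by omega : 2 * r + 1 ≠ 0)).1 ?_
    rw [hc_pow, div_le_iff₀ (by positivity)]
    calc P * ε ^ 2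
        ≤ P * (((1:ℝ)/2) ^ (2*r + 1) * k^2 * (2*(r:ℝ)^2/(((r:ℝ)+1)*(2*(r:ℝ)+1)))) := by gcongr
      _ = (1 / 2) ^ (2 * r + 1) * k ^ 2 := by
        linear_combination (1 / 2) ^ (2 * r + 1) * k ^ 2 * hP_mul
  have hc_int : ∫ t in 0..c, (k * c ^ r - k * t ^ r) ^ 2 = ε ^ 2 := by
    rw [integral_sq_mul_pow_sub_mul_pow, hc_pow, mul_div_cancel₀ _ (by positivity),
      mul_right_comm, hP_mul, one_mul]
  rw [omegaMonotone_eq_of_odd (by fun_prop) (hr.strictMono_pow.monotone.const_mul hk.le)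
    (fun t => by rw [hr.neg_pow, mul_neg]) hc hc_le hc_int]
  exact mul_pow_rpow_one_div_two_mul_add_one P k ε r hP hk hε
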